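/- arXiv:1311.2285 — 2 statements merged into one kernel-verified Lean document; each statement's English description precedes it below -/
import Mathlib

section
/- Let λ be an infinite cardinal and let X be a GO space. Then X is initially λ-compact if and only if, for every infinite regular cardinal ν ≤ λ, every strictly increasing ν-indexed sequence of elements of X has a supremum to which it converges, and every strictly decreasing ν-indexed sequence of elements of X has an infimum to which it converges. -/
universe u v

open Set Cardinal Filter Topology TopologicalSpace

section Defs

variable {X : Type u} [LinearOrder X]

/-- A subset `Y` of a linear order `X`, having no maximum, is `lam`-full in `X` on the right
if for every `y ∈ Y` the set `⋃ y' ∈ Y, (y, y')` (intervals computed in `X`)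
has cardinality at least `lam`. -/
def FullRight (lam : Cardinal.{u}) (Y : Set X) : Prop :=
  (¬ ∃ m ∈ Y, ∀ y ∈ Y, y ≤ m) ∧
    ∀ y ∈ Y, lam ≤ #(⋃ y' ∈ Y, Ioo y y')

/-- A subset `Y` of a linear order `X`, having no minimum, is `lam`-full in `X` on the left
if for every `y ∈ Y` the set `⋃ y' ∈ Y, (y', y)` (intervals computed in `X`)
has cardinality at least `lam`. -/
def FullLeft (lam : Cardinal.{u}) (Y : Set X) : Prop :=
  (¬ ∃ m ∈ Y, ∀ y ∈ Y, m ≤ y) ∧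
    ∀ y ∈ Y, lam ≤ #(⋃ y' ∈ Y, Ioo y' y)

/-- The pair `(A, B)` is a gap of the space `X`: `A`, `B` are open, `A ∪ B = X`,
every element of `A` is less than every element of `B`, `A` has no maximum and `B` has
no minimum (`A` or `B` may be empty). -/
def IsGap [TopologicalSpace X] (A B : Set X) : Prop :=
  IsOpen A ∧ IsOpen B ∧ A ∪ B = Set.univ ∧ (∀ a ∈ A, ∀ b ∈ B, a < b) ∧
    (¬ ∃ m ∈ A, ∀ a ∈ A, a ≤ m) ∧ (¬ ∃ m ∈ B, ∀ b ∈ B, m ≤ b)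

/-- The pair `(A, B)` is a pseudo-gap of the space `X`: `A`, `B` are open and nonempty,
`A ∪ B = X`, every element of `A` is less than every element of `B`, and either `A` has a
maximum and `B` has no minimum, or `A` has no maximum and `B` has a minimum. -/
def IsPseudoGap [TopologicalSpace X] (A B : Set X) : Prop :=
  IsOpen A ∧ IsOpen B ∧ A ∪ B = Set.univ ∧ (∀ a ∈ A, ∀ b ∈ B, a < b) ∧
    A.Nonempty ∧ B.Nonempty ∧
    (((∃ m ∈ A, ∀ a ∈ A, a ≤ m) ∧ ¬ ∃ m ∈ B, ∀ b ∈ B, m ≤ b) ∨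
      ((¬ ∃ m ∈ A, ∀ a ∈ A, a ≤ m) ∧ ∃ m ∈ B, ∀ b ∈ B, m ≤ b))

/-- The cofinality of `A`: the least cardinality of a subset of `A` cofinal in `A`. -/
noncomputable def cofinCard (A : Set X) : Cardinal.{u} :=
  sInf {c | ∃ S : Set X, S ⊆ A ∧ (∀ a ∈ A, ∃ s ∈ S, a ≤ s) ∧ c = #S}

/-- The coinitiality of `B`: the least cardinality of a subset of `B` coinitial in `B`. -/
noncomputable def coinitCard (B : Set X) : Cardinal.{u} :=
  sInf {c | ∃ S : Set X, S ⊆ B ∧ (∀ b ∈ B, ∃ s ∈ S, s ≤ b) ∧ c = #S}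

/-- `mu` is a type of the gap `(A, B)`: `mu` is the cofinality of `A` or the coinitiality
of `B`. -/
def IsGapType (mu : Cardinal.{u}) (A B : Set X) : Prop :=
  mu = cofinCard A ∨ mu = coinitCard B

/-- `mu` is the type of the pseudo-gap `(A, B)`: the cofinality of `A` if `B` has a minimum,
the coinitiality of `B` if `A` has a maximum. -/
def IsPseudoGapType (mu : Cardinal.{u}) (A B : Set X) : Prop :=
  ((∃ m ∈ B, ∀ b ∈ B, m ≤ b) ∧ mu = cofinCard A) ∨
    ((∃ m ∈ A, ∀ a ∈ A, a ≤ m) ∧ mu = coinitCard B)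

end Defs

/-- A topological space is `[ν, ν]`-compact if every open cover of cardinality at most `ν`
has a subcover of cardinality less than `ν`. -/
def NuNuCompact (X : Type u) [TopologicalSpace X] (ν : Cardinal.{u}) : Prop :=
  ∀ 𝒰 : Set (Set X), (∀ U ∈ 𝒰, IsOpen U) → ⋃₀ 𝒰 = Set.univ → #𝒰 ≤ ν →
    ∃ 𝒱 ⊆ 𝒰, #𝒱 < ν ∧ ⋃₀ 𝒱 = Set.univ

/-- A topological space is weakly `[ν, ν]`-compact if every open cover of cardinality at
most `ν` has a subfamily of cardinality less than `ν` whose union is dense. -/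
def WeakNuNuCompact (X : Type u) [TopologicalSpace X] (ν : Cardinal.{u}) : Prop :=
  ∀ 𝒰 : Set (Set X), (∀ U ∈ 𝒰, IsOpen U) → ⋃₀ 𝒰 = Set.univ → #𝒰 ≤ ν →
    ∃ 𝒱 ⊆ 𝒰, #𝒱 < ν ∧ Dense (⋃₀ 𝒱)

/-- A topological space is initially `lam`-compact if every open cover of cardinality at
most `lam` has a finite subcover. -/
def InitiallyCompact (X : Type u) [TopologicalSpace X] (lam : Cardinal.{u}) : Prop :=
  ∀ 𝒰 : Set (Set X), (∀ U ∈ 𝒰, IsOpen U) → ⋃₀ 𝒰 = Set.univ → #𝒰 ≤ lam →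
    ∃ 𝒱 ⊆ 𝒰, 𝒱.Finite ∧ ⋃₀ 𝒱 = Set.univ

/-- A topological space is weakly initially `lam`-compact if every open cover of cardinality
at most `lam` has a finite subfamily whose union is dense. -/
def WeakInitiallyCompact (X : Type u) [TopologicalSpace X] (lam : Cardinal.{u}) : Prop :=
  ∀ 𝒰 : Set (Set X), (∀ U ∈ 𝒰, IsOpen U) → ⋃₀ 𝒰 = Set.univ → #𝒰 ≤ lam →
    ∃ 𝒱 ⊆ 𝒰, 𝒱.Finite ∧ Dense (⋃₀ 𝒱)

/-- The sequence `x` `D`-converges to `p`: for every open neighbourhood `U` of `p`,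
`{i | x i ∈ U} ∈ D`. -/
def DConv {I : Type v} {X : Type u} [TopologicalSpace X] (D : Ultrafilter I)
    (x : I → X) (p : X) : Prop :=
  ∀ U : Set X, IsOpen U → p ∈ U → {i | x i ∈ U} ∈ D

/-- `X` is `D`-compact: every `I`-indexed sequence of elements of `X` `D`-converges to some
point of `X`. -/
def DCompact {I : Type v} (D : Ultrafilter I) (X : Type u) [TopologicalSpace X] : Prop :=
  ∀ x : I → X, ∃ p : X, DConv D x p

/-- `p` is a `D`-limit point of the sequence of sets `Y`: for every neighbourhood `U`
of `p`, `{i | U ∩ Y i ≠ ∅} ∈ D`. -/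
def DLimitPt {I : Type v} {X : Type u} [TopologicalSpace X] (D : Ultrafilter I)
    (Y : I → Set X) (p : X) : Prop :=
  ∀ U ∈ nhds p, {i | (U ∩ Y i).Nonempty} ∈ D

/-- `X` is `D`-pseudocompact: every `I`-indexed sequence of nonempty open sets of `X` has a
`D`-limit point. -/
def DPseudocompact {I : Type v} (D : Ultrafilter I) (X : Type u) [TopologicalSpace X] : Prop :=
  ∀ O : I → Set X, (∀ i, IsOpen (O i)) → (∀ i, (O i).Nonempty) → ∃ p : X, DLimitPt D O p

/-- The ultrafilter `D` is `ν`-decomposable: there is `f : I → ν` such that the preimage of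
every subset of `ν` of cardinality less than `ν` is not in `D`. -/
def Decomposable {I : Type v} (D : Ultrafilter I) (ν : Cardinal.{u}) : Prop :=
  ∃ f : I → ν.ord.ToType, ∀ S : Set ν.ord.ToType, #S < ν → f ⁻¹' S ∉ D

/-! In a GO space a monotone net converges to any of its cluster points, which is then its
supremum (resp. infimum); and initial `lam`-compactness gives every net indexed by at most `lam`
elements a cluster point.

Conversely, feeding a cofinal strictly monotone sequence of length `cof V`, a regular cardinal,
into the hypothesis shows that every nonempty `V` with `#V ≤ lam` has a supremum and an infimum
in its closure. Hence every filter `𝓕` containing a set `S` with `#S ≤ lam` has a cluster point: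
let `D = {z ∈ S | ∃ᶠ y in 𝓕, z ≤ y}` and `E = {z ∈ S | ∀ᶠ y in 𝓕, y < z} ⊇ S \ D`. If `sup D`
is not a cluster point, `𝓕` frequently lies above it, hence in `E`; if `inf E` is not one either,
`𝓕` eventually lies below `inf E`, which is absurd. An open cover of size `≤ lam` without finite
subcover yields such a filter without cluster point: the tail filter of a choice of points
avoiding the finite subfamilies. -/

section Cofinal

variable (α : Type u) [LinearOrder α]

theorem exists_isCofinal_wellFoundedLT : ∃ s : Set α, IsCofinal s ∧ WellFoundedLT s := by
  refine ⟨{a | ∀ b, WellOrderingRel b a → b < a}, isCofinal_setOfPred_imp_lt WellOrderingRel,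
    ⟨Subrelation.wf (r := fun x y => WellOrderingRel x.1 y.1) (fun {x y} hxy => ?_)
      (InvImage.wf _ WellOrderingRel.isWellOrder.wf)⟩⟩
  rcases trichotomous_of WellOrderingRel x.1 y.1 with h | h | h
  · exact h
  · exact absurd (Subtype.ext h ▸ hxy) (lt_irrefl _)
  · exact absurd (x.2 _ h) (not_lt.2 hxy.le)

theorem Order.isRegular_cof [Nonempty α] [NoMaxOrder α] : (Order.cof α).IsRegular := by
  obtain ⟨s, hs, _⟩ := exists_isCofinal_wellFoundedLT α
  have : Nonempty s := hs.nonempty.to_subtype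
  have : NoMaxOrder s := ⟨fun x => by
    obtain ⟨y, hxy⟩ := exists_gt (x : α)
    obtain ⟨z, hz, hyz⟩ := hs y
    exact ⟨⟨z, hz⟩, hxy.trans_le hyz⟩⟩
  rw [← Order.cof_eq_of_isCofinal hs]
  exact ⟨Order.aleph0_le_cof, (Order.cof_ord_cof s).ge⟩

theorem exists_strictMono_isCofinal_range :
    ∃ f : (Order.cof α).ord.ToType → α, StrictMono f ∧ IsCofinal (range f) := by
  obtain ⟨s, hs, _⟩ := exists_isCofinal_wellFoundedLT α
  obtain ⟨t, ht, htype⟩ := Ordinal.exists_ord_cof_eq s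
  rw [Order.cof_eq_of_isCofinal hs, ← Ordinal.type_toType (Order.cof α).ord] at htype
  obtain ⟨e⟩ := Ordinal.type_eq.1 htype.symm
  let e' := OrderIso.ofRelIsoLT e
  refine ⟨fun i => (e' i : s), (Subtype.strictMono_coe _).comp
    ((Subtype.strictMono_coe _).comp e'.strictMono), (hs.trans ht).mono ?_⟩
  rintro _ ⟨x, hx, rfl⟩
  exact ⟨e'.symm ⟨x, hx⟩, by simp⟩

end Cofinal

section InitiallyCompact

variable {X : Type u} [TopologicalSpace X] {lam : Cardinal.{u}}

theorem InitiallyCompact.elim_directed_cover (hX : InitiallyCompact X lam) {ι : Type u}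
    [Preorder ι] [IsDirectedOrder ι] [Nonempty ι] (hι : #ι ≤ lam) (U : ι → Set X)
    (hUo : ∀ i, IsOpen (U i)) (hU : ⋃ i, U i = Set.univ) (hmono : Monotone U) :
    ∃ i, U i = Set.univ := by
  obtain ⟨𝒱, h𝒱, h𝒱fin, h𝒱U⟩ := hX (range U) (forall_mem_range.2 hUo) (sUnion_range U ▸ hU)
    (mk_range_le.trans hι)
  obtain ⟨t, -, htfin, htU⟩ :=
    (exists_subset_image_finite_and (s := Set.univ) (p := fun 𝒱 => ⋃₀ 𝒱 = Set.univ)).1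
      ⟨𝒱, by rwa [image_univ], h𝒱fin, h𝒱U⟩
  obtain ⟨j, hj⟩ := htfin.bddAbove
  refine ⟨j, eq_univ_of_forall fun x => ?_⟩
  obtain ⟨_, ⟨i, hi, rfl⟩, hxi⟩ := mem_sUnion.1 (htU ▸ mem_univ x)
  exact hmono (hj hi) hxi

theorem InitiallyCompact.exists_mapClusterPt (hX : InitiallyCompact X lam) {ι : Type u}
    [Preorder ι] [IsDirectedOrder ι] [Nonempty ι] (hι : #ι ≤ lam) (f : ι → X) :
    ∃ p, MapClusterPt p atTop f := by
  by_contra! hf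
  have hcov : ∀ p, ∃ i, p ∉ closure (f '' Ici i) := fun p => by
    have hp := hf p
    simp only [MapClusterPt, clusterPt_iff_forall_mem_closure, not_forall] at hp
    obtain ⟨s, hs, hps⟩ := hp
    obtain ⟨i, hi⟩ := mem_atTop_sets.1 (mem_map.1 hs)
    exact ⟨i, fun h => hps (closure_mono (image_subset_iff.2 hi) h)⟩
  obtain ⟨i, hi⟩ := hX.elim_directed_cover hι (fun i => (closure (f '' Ici i))ᶜ)
    (fun i => isClosed_closure.isOpen_compl) (iUnion_eq_univ_iff.2 hcov)
    (fun i j hij => compl_subset_compl.2 (closure_mono (image_mono (Ici_subset_Ici.2 hij))))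
  exact eq_univ_iff_forall.1 hi (f i) (subset_closure (mem_image_of_mem f self_mem_Ici))

theorem initiallyCompact_of_forall_clusterPt
    (h : ∀ 𝓕 : Filter X, 𝓕.NeBot → ∀ S ∈ 𝓕, #S ≤ lam → ∃ p, ClusterPt p 𝓕) :
    InitiallyCompact X lam := by
  intro 𝒰 h𝒰o h𝒰 h𝒰lam
  by_cases hfin : 𝒰.Finite
  · exact ⟨𝒰, subset_rfl, hfin, h𝒰⟩
  have : Infinite 𝒰 := infinite_coe_iff.2 hfin
  by_contra! hno
  have hpt : ∀ t : Finset 𝒰, ∃ x, ∀ U ∈ t, x ∉ (U : Set X) := fun t => by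
    by_contra! ht
    refine hno ((↑) '' (t : Set 𝒰)) (by simp) (t.finite_toSet.image _)
      (eq_univ_of_forall fun x => ?_)
    obtain ⟨U, hU, hxU⟩ := ht x
    exact ⟨U, ⟨U, hU, rfl⟩, hxU⟩
  choose pt hpt using hpt
  obtain ⟨p, hp⟩ := h (map pt atTop) inferInstance (range pt) range_mem_map
    (mk_range_le.trans ((mk_finset_of_infinite 𝒰).trans_le h𝒰lam))
  obtain ⟨U, hU, hpU⟩ := mem_sUnion.1 (h𝒰 ▸ mem_univ p)
  obtain ⟨t, ht, htU⟩ := ((MapClusterPt.frequently hp ((h𝒰o U hU).mem_nhds hpU)).and_eventually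
    (eventually_ge_atTop {⟨U, hU⟩})).exists
  exact hpt t _ (htU (Finset.mem_singleton_self _)) ht

end InitiallyCompact

/-- For a linearly ordered space this is the GO-space axiom: a base of order-convex sets. -/
def HasOrdConnectedNhds (X : Type*) [Preorder X] [TopologicalSpace X] : Prop :=
  ∀ x : X, (𝓝 x).HasBasis (fun s => s ∈ 𝓝 x ∧ s.OrdConnected) id

section OrdConnectedNhds

variable {X : Type u} [TopologicalSpace X]

section Preorder

variable [Preorder X]

theorem TopologicalSpace.IsTopologicalBasis.hasOrdConnectedNhds {𝓑 : Set (Set X)}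
    (h𝓑 : IsTopologicalBasis 𝓑) (h𝓑c : ∀ s ∈ 𝓑, s.OrdConnected) : HasOrdConnectedNhds X :=
  fun _ => h𝓑.nhds_hasBasis.to_hasBasis
    (fun s ⟨hs𝓑, hxs⟩ => ⟨s, ⟨h𝓑.mem_nhds hs𝓑 hxs, h𝓑c s hs𝓑⟩, subset_rfl⟩)
    (fun _ ⟨hs, _⟩ => h𝓑.nhds_hasBasis.mem_iff.1 hs)

theorem HasOrdConnectedNhds.dual (hX : HasOrdConnectedNhds X) : HasOrdConnectedNhds Xᵒᵈ :=
  fun x => (hX (OrderDual.ofDual x)).to_hasBasis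
    (fun s hs => ⟨s, ⟨hs.1, hs.2.dual⟩, subset_rfl⟩)
    (fun s hs => ⟨s, ⟨hs.1, hs.2.dual⟩, subset_rfl⟩)

theorem HasOrdConnectedNhds.exists_compl_mem_of_not_clusterPt (hX : HasOrdConnectedNhds X)
    {𝓕 : Filter X} {p : X} (hp : ¬ ClusterPt p 𝓕) : ∃ B ∈ 𝓝 p, B.OrdConnected ∧ Bᶜ ∈ 𝓕 := by
  rw [clusterPt_iff_not_disjoint, not_not] at hp
  obtain ⟨B, ⟨hB, hBc⟩, hBF⟩ := (hX p).disjoint_iff_left.1 hp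
  exact ⟨B, hB, hBc, hBF⟩

end Preorder

variable [LinearOrder X]

theorem HasOrdConnectedNhds.frequently_lt_of_not_clusterPt (hX : HasOrdConnectedNhds X)
    {𝓕 : Filter X} {D : Set X} {a : X} (haD : a ∈ closure D)
    (hD : ∀ d ∈ D, ∃ᶠ y in 𝓕, d ≤ y) (hna : ¬ ClusterPt a 𝓕) : ∃ᶠ y in 𝓕, a < y := by
  obtain ⟨B, hB, hBc, hBF⟩ := hX.exists_compl_mem_of_not_clusterPt hna
  obtain ⟨d, hdB, hdD⟩ := mem_closure_iff_nhds.1 haD B hB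
  exact ((hD d hdD).and_eventually hBF).mono fun y ⟨hdy, hyB⟩ =>
    not_le.1 fun hya => hyB (hBc.out hdB (mem_of_mem_nhds hB) ⟨hdy, hya⟩)

theorem HasOrdConnectedNhds.eventually_lt_of_not_clusterPt (hX : HasOrdConnectedNhds X)
    {𝓕 : Filter X} {E : Set X} {b : X} (hbE : b ∈ closure E)
    (hE : ∀ e ∈ E, ∀ᶠ y in 𝓕, y < e) (hnb : ¬ ClusterPt b 𝓕) : ∀ᶠ y in 𝓕, y < b := by
  obtain ⟨B, hB, hBc, hBF⟩ := hX.exists_compl_mem_of_not_clusterPt hnb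
  obtain ⟨e, heB, heE⟩ := mem_closure_iff_nhds.1 hbE B hB
  filter_upwards [hE e heE, hBF] with y hye hyB
  exact not_le.1 fun hby => hyB (hBc.out (mem_of_mem_nhds hB) heB ⟨hby, hye.le⟩)

theorem HasOrdConnectedNhds.exists_clusterPt (hX : HasOrdConnectedNhds X) {lam : Cardinal.{u}}
    (hsup : ∀ V : Set X, V.Nonempty → #V ≤ lam → ∃ a, IsLUB V a ∧ a ∈ closure V)
    (hinf : ∀ V : Set X, V.Nonempty → #V ≤ lam → ∃ b, IsGLB V b ∧ b ∈ closure V)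
    {𝓕 : Filter X} [𝓕.NeBot] {S : Set X} (hS : S ∈ 𝓕) (hSlam : #S ≤ lam) :
    ∃ p, ClusterPt p 𝓕 := by
  by_contra! hno
  set D := {z ∈ S | ∃ᶠ y in 𝓕, z ≤ y}
  set E := {z ∈ S | ∀ᶠ y in 𝓕, y < z}
  have hSDE : ∀ z ∈ S, z ∉ D → z ∈ E := fun z hz hzD =>
    ⟨hz, by simpa [D, hz, Filter.not_frequently] using hzD⟩
  have hfreq : ∃ᶠ y in 𝓕, y ∈ E := by
    rcases D.eq_empty_or_nonempty with hD | hD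
    · exact Eventually.frequently (mem_of_superset hS fun z hz => hSDE z hz (hD ▸ notMem_empty z))
    · obtain ⟨a, ha, haD⟩ := hsup D hD ((mk_le_mk_of_subset (sep_subset _ _)).trans hSlam)
      exact ((hX.frequently_lt_of_not_clusterPt haD (fun d hd => hd.2) (hno a)).and_eventually
        hS).mono fun y ⟨hay, hyS⟩ => hSDE y hyS fun hyD => (ha.1 hyD).not_gt hay
  obtain ⟨b, hb, hbE⟩ := hinf E hfreq.exists ((mk_le_mk_of_subset (sep_subset _ _)).trans hSlam)
  obtain ⟨y, hyE, hyb⟩ := (hfreq.and_eventually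
    (hX.eventually_lt_of_not_clusterPt hbE (fun e he => he.2) (hno b))).exists
  exact (hb.1 hyE).not_gt hyb

variable [T1Space X]

theorem Monotone.isLUB_and_tendsto_of_mapClusterPt (hX : HasOrdConnectedNhds X)
    {ι : Type*} [Preorder ι] {f : ι → X} (hf : Monotone f) {p : X} (hp : MapClusterPt p atTop f) :
    IsLUB (range f) p ∧ Tendsto f atTop (𝓝 p) := by
  have hub : p ∈ upperBounds (range f) := by
    rintro _ ⟨i, rfl⟩
    by_contra! hpi
    obtain ⟨B, ⟨hB, hBc⟩, hBi⟩ := (hX p).mem_iff.1 (isOpen_compl_singleton.mem_nhds hpi.ne)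
    obtain ⟨j, hj, hij⟩ := ((hp.frequently hB).and_eventually (eventually_ge_atTop i)).exists
    exact hBi (hBc.out (mem_of_mem_nhds hB) hj ⟨hpi.le, hf hij⟩) rfl
  refine ⟨⟨hub, fun b hb => ?_⟩, ?_⟩
  · by_contra! hbp
    obtain ⟨B, ⟨hB, hBc⟩, hBb⟩ := (hX p).mem_iff.1 (isOpen_compl_singleton.mem_nhds hbp.ne')
    obtain ⟨j, hj⟩ := (hp.frequently hB).exists
    exact hBb (hBc.out hj (mem_of_mem_nhds hB) ⟨hb ⟨j, rfl⟩, hbp.le⟩) rfl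
  · rw [(hX p).tendsto_right_iff]
    rintro B ⟨hB, hBc⟩
    obtain ⟨i, hi⟩ := (hp.frequently hB).exists
    filter_upwards [eventually_ge_atTop i] with j hij
    exact hBc.out hi (mem_of_mem_nhds hB) ⟨hf hij, hub ⟨j, rfl⟩⟩

theorem Antitone.isGLB_and_tendsto_of_mapClusterPt (hX : HasOrdConnectedNhds X)
    {ι : Type*} [Preorder ι] {f : ι → X} (hf : Antitone f) {p : X} (hp : MapClusterPt p atTop f) :
    IsGLB (range f) p ∧ Tendsto f atTop (𝓝 p) :=
  have : T1Space Xᵒᵈ := ‹T1Space X›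
  hf.dual_right.isLUB_and_tendsto_of_mapClusterPt hX.dual hp

end OrdConnectedNhds

section MonotoneConvergence

variable {X : Type u} [LinearOrder X] [TopologicalSpace X] {lam : Cardinal.{u}}

theorem exists_isLUB_mem_closure
    (H : ∀ κ : Cardinal.{u}, κ.IsRegular → κ ≤ lam → ∀ f : κ.ord.ToType → X, StrictMono f →
      ∃ s, IsLUB (range f) s ∧ Tendsto f atTop (𝓝 s))
    {V : Set X} (hV : V.Nonempty) (hVlam : #V ≤ lam) : ∃ a, IsLUB V a ∧ a ∈ closure V := by
  by_cases hmax : ∃ m, IsGreatest V m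
  · obtain ⟨m, hm⟩ := hmax
    exact ⟨m, hm.isLUB, subset_closure hm.1⟩
  have : Nonempty V := hV.to_subtype
  have : NoMaxOrder V := ⟨fun x => by
    obtain ⟨y, hyV, hxy⟩ : ∃ y ∈ V, (x : X) < y := by
      simpa [IsGreatest, mem_upperBounds, x.2] using not_exists.1 hmax x
    exact ⟨⟨y, hyV⟩, hxy⟩⟩
  obtain ⟨f, hf, hcof⟩ := exists_strictMono_isCofinal_range V
  have hκ := Order.isRegular_cof V
  have : Nonempty (Order.cof V).ord.ToType := nonempty_ord_toType hκ.ne_zero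
  obtain ⟨s, hs, hlim⟩ := H _ hκ ((Order.cof_le_cardinalMk V).trans hVlam) (Subtype.val ∘ f)
    ((Subtype.strictMono_coe _).comp hf)
  refine ⟨s, ⟨fun v hv => ?_, fun b hb => hs.2 ?_⟩,
    mem_closure_of_tendsto hlim (.of_forall fun i => (f i).2)⟩
  · obtain ⟨_, ⟨i, rfl⟩, hvi⟩ := hcof ⟨v, hv⟩
    exact (show v ≤ f i from hvi).trans (hs.1 ⟨i, rfl⟩)
  · rintro _ ⟨i, rfl⟩
    exact hb (f i).2

theorem exists_isGLB_mem_closure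
    (H : ∀ κ : Cardinal.{u}, κ.IsRegular → κ ≤ lam → ∀ f : κ.ord.ToType → X, StrictAnti f →
      ∃ s, IsGLB (range f) s ∧ Tendsto f atTop (𝓝 s))
    {V : Set X} (hV : V.Nonempty) (hVlam : #V ≤ lam) : ∃ b, IsGLB V b ∧ b ∈ closure V :=
  exists_isLUB_mem_closure (X := Xᵒᵈ) H hV hVlam

end MonotoneConvergence

theorem stmt13_general (lam : Cardinal.{u})
    (X : Type u) [LinearOrder X] [TopologicalSpace X] [T2Space X]
    (hGO : ∃ 𝓑 : Set (Set X), IsTopologicalBasis 𝓑 ∧ ∀ s ∈ 𝓑, s.OrdConnected) :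
    InitiallyCompact X lam ↔
      ∀ ν : Cardinal.{u}, ℵ₀ ≤ ν → ν.IsRegular → ν ≤ lam →
        (∀ f : ν.ord.ToType → X, StrictMono f →
          ∃ s : X, IsLUB (Set.range f) s ∧ Tendsto f atTop (𝓝 s)) ∧
        (∀ f : ν.ord.ToType → X, StrictAnti f →
          ∃ s : X, IsGLB (Set.range f) s ∧ Tendsto f atTop (𝓝 s)) := by
  obtain ⟨𝓑, h𝓑, h𝓑c⟩ := hGO
  have hX := h𝓑.hasOrdConnectedNhds h𝓑c
  constructor
  · intro hIC ν hν _ hνlam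
    have : Nonempty ν.ord.ToType := nonempty_ord_toType (aleph0_pos.trans_le hν).ne'
    have hcard : #ν.ord.ToType ≤ lam := (mk_ord_toType ν).trans_le hνlam
    exact ⟨fun f hf => (hIC.exists_mapClusterPt hcard f).imp fun p hp =>
        hf.monotone.isLUB_and_tendsto_of_mapClusterPt hX hp,
      fun f hf => (hIC.exists_mapClusterPt hcard f).imp fun p hp =>
        hf.antitone.isGLB_and_tendsto_of_mapClusterPt hX hp⟩
  · intro H
    refine initiallyCompact_of_forall_clusterPt fun 𝓕 _ S hS hSlam =>
      hX.exists_clusterPt (fun V => exists_isLUB_mem_closure ?_)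
        (fun V => exists_isGLB_mem_closure ?_) hS hSlam
    · exact fun κ hκ hκlam => (H κ hκ.aleph0_le hκ hκlam).1
    · exact fun κ hκ hκlam => (H κ hκ.aleph0_le hκ hκlam).2

/-- A GO space is initially `lam`-compact iff, for every infinite regular `ν ≤ lam`, every
strictly increasing `ν`-indexed sequence has a supremum to which it converges and every
strictly decreasing `ν`-indexed sequence has an infimum to which it converges. -/
theorem stmt13 (lam : Cardinal.{u}) (hlam : ℵ₀ ≤ lam)
    (X : Type u) [LinearOrder X] [TopologicalSpace X] [T2Space X]
    (hGO : ∃ 𝓑 : Set (Set X), IsTopologicalBasis 𝓑 ∧ ∀ s ∈ 𝓑, s.OrdConnected) :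
    InitiallyCompact X lam ↔
      ∀ ν : Cardinal.{u}, ℵ₀ ≤ ν → ν.IsRegular → ν ≤ lam →
        (∀ f : ν.ord.ToType → X, StrictMono f →
          ∃ s : X, IsLUB (Set.range f) s ∧ Tendsto f atTop (𝓝 s)) ∧
        (∀ f : ν.ord.ToType → X, StrictAnti f →
          ∃ s : X, IsGLB (Set.range f) s ∧ Tendsto f atTop (𝓝 s)) :=
  stmt13_general lam X hGO
end

section
/- Let λ be an infinite cardinal, let (X_j)_{j∈J} be a family of nonempty topological spaces, and suppose that all the X_j with at most one exception are GO spaces. Then the product ∏_{j∈J} X_j (with the product topology) is initially λ-compact if and only if every X_j is initially λ-compact. -/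
/-!
Projections are continuous surjections, which gives one direction.

Conversely, suppose an open cover `𝒰` of the product with `#𝒰 ≤ λ` has no finite subcover, and
pick for every finite `t ⊆ 𝒰` a point `z t` outside `⋃ t`; there are at most `λ` such `t`.
In an initially `λ`-compact GO space every ultrafilter `F` containing a set of at most `λ` points
converges: otherwise the points `y` with `Ioi y ∈ F` and those with `Iio y ∈ F` form two
complementary sets, open because points have convex neighbourhoods outside `F`, and one of them
together with the rays at the points of that small set is an open cover by at most `λ` sets with
no member in `F`. So along every ultrafilter `D` on the finite subfamilies the GO coordinates of
`z` converge, and `D` can be taken finer than `atTop` with the exceptional coordinate converging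
as well, since `atTop` has a base of at most `λ` sets and hence its image has a cluster point.
The limit lies in some `U ∈ 𝒰`, so `z t ∈ U` for `D`-many `t`, among them some `t` containing `U`.
-/

universe u v

open Set Cardinal Filter Topology TopologicalSpace

/-- A topological space is a GO space if it carries a linear order for which the topology is
Hausdorff and has a base of order-convex sets. -/
def IsGOSpace (X : Type u) [TopologicalSpace X] : Prop :=
  ∃ li : LinearOrder X, T2Space X ∧
    ∃ 𝓑 : Set (Set X), IsTopologicalBasis 𝓑 ∧
      ∀ s ∈ 𝓑, @Set.OrdConnected X li.toPartialOrder.toPreorder s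

section InitiallyCompact

variable {X : Type u} [TopologicalSpace X] {lam : Cardinal.{u}}

theorem InitiallyCompact.of_continuous_surjective {Y : Type u} [TopologicalSpace Y]
    (h : InitiallyCompact X lam) {f : X → Y} (hf : Continuous f) (hsurj : f.Surjective) :
    InitiallyCompact Y lam := by
  intro 𝒰 hopen hcover hcard
  obtain ⟨𝒱, h𝒱, hfin, hcov⟩ := h (preimage f '' 𝒰)
    (forall_mem_image.2 fun U hU => (hopen U hU).preimage hf)
    (by rw [sUnion_image, ← preimage_iUnion₂, ← sUnion_eq_biUnion, hcover, preimage_univ])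
    (mk_image_le.trans hcard)
  obtain ⟨𝒲, h𝒲, rfl⟩ := subset_image_iff.1 h𝒱
  refine ⟨𝒲, h𝒲, hfin.of_finite_image hsurj.preimage_injective.injOn, ?_⟩
  rw [sUnion_image, ← preimage_iUnion₂, ← sUnion_eq_biUnion] at hcov
  exact hsurj.preimage_injective (hcov.trans preimage_univ.symm)

theorem InitiallyCompact.exists_mem_ultrafilter (h : InitiallyCompact X lam) {ι : Type u}
    (hι : #ι ≤ lam) {U : ι → Set X} (hU : ∀ i, IsOpen (U i)) (hcover : ⋃ i, U i = Set.univ)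
    (F : Ultrafilter X) : ∃ i, U i ∈ F := by
  obtain ⟨𝒱, h𝒱, hfin, hcov⟩ :=
    h (range U) (forall_mem_range.2 hU) (sUnion_range U ▸ hcover) (mk_range_le.trans hι)
  obtain ⟨V, hV, hVF⟩ := (Ultrafilter.finite_sUnion_mem_iff hfin).1 (hcov ▸ univ_mem)
  obtain ⟨i, rfl⟩ := h𝒱 hV
  exact ⟨i, hVF⟩

theorem InitiallyCompact.exists_clusterPt (h : InitiallyCompact X lam) {ι : Type u}
    (hι : #ι ≤ lam) {ℱ : Filter X} [ℱ.NeBot] {p : ι → Prop} {s : ι → Set X}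
    (hℱ : ℱ.HasBasis p s) : ∃ x, ClusterPt x ℱ := by
  by_contra! hno
  have hcover : ⋃ i : {i // p i}, (closure (s i))ᶜ = Set.univ := by
    refine iUnion_eq_univ_iff.2 fun x => ?_
    obtain ⟨S, hS, hxS⟩ : ∃ S ∈ ℱ, x ∉ closure S := by
      simpa [clusterPt_iff_forall_mem_closure] using hno x
    obtain ⟨i, hi, hiS⟩ := hℱ.mem_iff.1 hS
    exact ⟨⟨i, hi⟩, fun hx => hxS (closure_mono hiS hx)⟩
  obtain ⟨⟨i, hi⟩, hiF⟩ := h.exists_mem_ultrafilter ((mk_subtype_le p).trans hι)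
    (fun _ => isClosed_closure.isOpen_compl) hcover (Ultrafilter.of ℱ)
  have : closure (s i) ∈ Ultrafilter.of ℱ :=
    Ultrafilter.of_le ℱ (mem_of_superset (hℱ.mem_of_mem hi) subset_closure)
  exact Ultrafilter.compl_mem_iff_notMem.1 hiF this

end InitiallyCompact

theorem dConv_iff_tendsto {I : Type v} {X : Type u} [TopologicalSpace X] {D : Ultrafilter I}
    {x : I → X} {p : X} : DConv D x p ↔ Tendsto x D (𝓝 p) := by
  rw [(nhds_basis_opens p).tendsto_right_iff]
  exact ⟨fun h U hU => h U hU.2 hU.1, fun h U hU hpU => h U ⟨hpU, hU⟩⟩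

section LinearOrder

variable {X : Type u} [TopologicalSpace X] [LinearOrder X] {𝓑 : Set (Set X)}

theorem Ultrafilter.le_nhds_or_Iio_mem_or_Ioi_mem (F : Ultrafilter X) (y : X) :
    (F : Filter X) ≤ 𝓝 y ∨ Iio y ∈ F ∨ Ioi y ∈ F := by
  have : Iio y ∪ ({y} ∪ Ioi y) ∈ F := by
    rw [singleton_union, Ioi_insert, Iio_union_Ici]
    exact univ_mem
  rcases F.union_mem_iff.1 this with hlt | hge
  · exact Or.inr (Or.inl hlt)
  rcases F.union_mem_iff.1 hge with hy | hgt
  · exact Or.inl ((le_pure_iff.2 hy).trans (pure_le_nhds y))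
  · exact Or.inr (Or.inr hgt)

theorem TopologicalSpace.IsTopologicalBasis.isOpen_Ioi_of_ordConnected [T1Space X]
    (h𝓑 : IsTopologicalBasis 𝓑) (hconv : ∀ W ∈ 𝓑, W.OrdConnected) (a : X) :
    IsOpen (Ioi a) := by
  refine h𝓑.isOpen_iff.2 fun x hx => ?_
  obtain ⟨W, hW𝓑, hxW, hWa⟩ := h𝓑.exists_subset_of_mem_open hx.ne' isOpen_compl_singleton
  refine ⟨W, hW𝓑, hxW, fun z hzW => lt_of_not_ge fun hza => hWa ?_ rfl⟩
  exact (hconv W hW𝓑).out hzW hxW ⟨hza, hx.le⟩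

theorem TopologicalSpace.IsTopologicalBasis.isOpen_Iio_of_ordConnected [T1Space X]
    (h𝓑 : IsTopologicalBasis 𝓑) (hconv : ∀ W ∈ 𝓑, W.OrdConnected) (a : X) :
    IsOpen (Iio a) :=
  haveI : T1Space Xᵒᵈ := ‹T1Space X›
  TopologicalSpace.IsTopologicalBasis.isOpen_Ioi_of_ordConnected (X := Xᵒᵈ) h𝓑
    (fun W hW => (hconv W hW).dual) a

theorem isOpen_setOf_Iio_mem (h𝓑 : IsTopologicalBasis 𝓑) (hconv : ∀ W ∈ 𝓑, W.OrdConnected)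
    {F : Ultrafilter X} (hF : ∀ y, ¬ (F : Filter X) ≤ 𝓝 y) : IsOpen {y | Iio y ∈ F} := by
  refine isOpen_iff_mem_nhds.2 fun y hy => ?_
  obtain ⟨W, hW𝓑, hyW, hWF⟩ : ∃ W ∈ 𝓑, y ∈ W ∧ W ∉ F := by
    simpa [h𝓑.nhds_hasBasis.ge_iff] using hF y
  refine mem_of_superset ((h𝓑.isOpen hW𝓑).mem_nhds hyW) fun u huW => ?_
  rcases F.le_nhds_or_Iio_mem_or_Ioi_mem u with hu | hu | hu
  · exact absurd hu (hF u)
  · exact hu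
  · refine absurd (mem_of_superset (inter_mem hu hy) ?_) hWF
    exact Ioo_subset_Icc_self.trans ((hconv W hW𝓑).out huW hyW)

theorem isOpen_setOf_Ioi_mem (h𝓑 : IsTopologicalBasis 𝓑) (hconv : ∀ W ∈ 𝓑, W.OrdConnected)
    {F : Ultrafilter X} (hF : ∀ y, ¬ (F : Filter X) ≤ 𝓝 y) : IsOpen {y | Ioi y ∈ F} :=
  isOpen_setOf_Iio_mem (X := Xᵒᵈ) h𝓑 (fun W hW => (hconv W hW).dual) hF

end LinearOrder

section GOSpace

variable {X : Type u} [TopologicalSpace X] [LinearOrder X] {lam : Cardinal.{u}}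

theorem InitiallyCompact.setOf_Ioi_mem_notMem [ClosedIciTopology X]
    (h : InitiallyCompact X lam) {F : Ultrafilter X} {R : Set X} (hR : R ∈ F)
    (hRcard : #R ≤ lam) (hF : ∀ y, ¬ (F : Filter X) ≤ 𝓝 y) (hopen : IsOpen {y | Iio y ∈ F}) :
    {y | Ioi y ∈ F} ∉ F := by
  intro hA
  have hdisj : ∀ y, Ioi y ∈ F → Iio y ∉ F := fun y h₁ h₂ =>
    (F.nonempty_of_mem (inter_mem h₁ h₂)).elim fun _ hz => lt_asymm hz.1 hz.2
  have hcover : ⋃ s : ↥(R ∩ {y | Ioi y ∈ F}), {y | Iio y ∈ F} ∪ Iio (s : X) = Set.univ := by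
    refine iUnion_eq_univ_iff.2 fun y => ?_
    rcases (F.le_nhds_or_Iio_mem_or_Ioi_mem y).resolve_left (hF y) with hy | hy
    · obtain ⟨s, hs⟩ := F.nonempty_of_mem (inter_mem hR hA)
      exact ⟨⟨s, hs⟩, Or.inl hy⟩
    · obtain ⟨s, ⟨hsR, hsA⟩, hys⟩ := F.nonempty_of_mem (inter_mem (inter_mem hR hA) hy)
      exact ⟨⟨s, hsR, hsA⟩, Or.inr hys⟩
  obtain ⟨⟨s, _, hsA⟩, hsF⟩ := h.exists_mem_ultrafilter
    ((mk_le_mk_of_subset inter_subset_left).trans hRcard) (fun _ => hopen.union isOpen_Iio) hcover F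
  rcases F.union_mem_iff.1 hsF with hBF | hsB
  · obtain ⟨y, hyA, hyB⟩ := F.nonempty_of_mem (inter_mem hA hBF)
    exact hdisj y hyA hyB
  · exact hdisj s hsA hsB

theorem InitiallyCompact.exists_le_nhds_of_ordConnected_basis [T1Space X] {𝓑 : Set (Set X)}
    (h𝓑 : IsTopologicalBasis 𝓑) (hconv : ∀ W ∈ 𝓑, W.OrdConnected) (h : InitiallyCompact X lam)
    (F : Ultrafilter X) {R : Set X} (hR : R ∈ F) (hRcard : #R ≤ lam) :
    ∃ p, (F : Filter X) ≤ 𝓝 p := by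
  by_contra! hF
  have : ClosedIciTopology X :=
    ⟨fun a => by simpa using (h𝓑.isOpen_Iio_of_ordConnected hconv a).isClosed_compl⟩
  have : ClosedIicTopology X :=
    ⟨fun a => by simpa using (h𝓑.isOpen_Ioi_of_ordConnected hconv a).isClosed_compl⟩
  have hcover : {y | Iio y ∈ F} ∪ {y | Ioi y ∈ F} ∈ F :=
    mem_of_superset univ_mem fun y _ => (F.le_nhds_or_Iio_mem_or_Ioi_mem y).resolve_left (hF y)
  rcases F.union_mem_iff.1 hcover with hB | hA
  · exact h.setOf_Ioi_mem_notMem (X := Xᵒᵈ) hR hRcard hF (isOpen_setOf_Ioi_mem h𝓑 hconv hF) hB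
  · exact h.setOf_Ioi_mem_notMem hR hRcard hF (isOpen_setOf_Iio_mem h𝓑 hconv hF) hA

end GOSpace

theorem IsGOSpace.dCompact {X : Type u} [TopologicalSpace X] (hX : IsGOSpace X)
    {lam : Cardinal.{u}} (h : InitiallyCompact X lam) {I : Type u} (hI : #I ≤ lam)
    (D : Ultrafilter I) : DCompact D X := by
  obtain ⟨_, _, 𝓑, h𝓑, hconv⟩ := hX
  intro x
  obtain ⟨p, hp⟩ := h.exists_le_nhds_of_ordConnected_basis h𝓑 hconv (D.map x) range_mem_map
    (mk_range_le.trans hI)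
  exact ⟨p, dConv_iff_tendsto.2 hp⟩

theorem Cardinal.mk_finset_le {α : Type u} {lam : Cardinal.{u}} (hlam : ℵ₀ ≤ lam)
    (hα : #α ≤ lam) : #(Finset α) ≤ lam := by
  rcases finite_or_infinite α with _ | _
  · exact (lt_aleph0_of_finite _).le.trans hlam
  · rwa [mk_finset_of_infinite]

theorem initiallyCompact_pi {J : Type u} {X : J → Type u} [∀ j, TopologicalSpace (X j)]
    {lam : Cardinal.{u}} (hlam : ℵ₀ ≤ lam) {E : Set J} (hE : E.Subsingleton)
    (hcomp : ∀ j ∈ E, InitiallyCompact (X j) lam)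
    (hD : ∀ j ∉ E, ∀ {I : Type u}, #I ≤ lam → ∀ D : Ultrafilter I, DCompact D (X j)) :
    InitiallyCompact (∀ j, X j) lam := by
  intro 𝒰 hopen hcover hcard
  by_contra! hfin
  have hz : ∀ t : Finset 𝒰, ∃ z, ∀ U ∈ t, z ∉ (U : Set (∀ j, X j)) := by
    intro t
    obtain ⟨z, hz⟩ := (ne_univ_iff_exists_notMem _).1
      (hfin ((↑) '' (t : Set 𝒰)) (by simp [image_subset_iff]) (t.finite_toSet.image _))
    exact ⟨z, fun U hU hzU => hz ⟨U, mem_image_of_mem _ hU, hzU⟩⟩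
  choose z hz using hz
  have hI : #(Finset 𝒰) ≤ lam := mk_finset_le hlam hcard
  obtain ⟨D, hDle, hDE⟩ : ∃ D : Ultrafilter (Finset 𝒰),
      (D : Filter (Finset 𝒰)) ≤ atTop ∧ ∀ j ∈ E, ∃ p, Tendsto (z · j) D (𝓝 p) := by
    rcases hE.eq_empty_or_singleton with rfl | ⟨e, rfl⟩
    · exact ⟨.of atTop, Ultrafilter.of_le _, by simp⟩
    · obtain ⟨p, hp⟩ := (hcomp e rfl).exists_clusterPt hI (atTop_basis.map (z · e))
      obtain ⟨D, hD, hDp⟩ := mapClusterPt_iff_ultrafilter.1 hp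
      exact ⟨D, hD, fun j hj => hj ▸ ⟨p, hDp⟩⟩
  have hlim : ∀ j, ∃ p, Tendsto (z · j) D (𝓝 p) := by
    intro j
    by_cases hj : j ∈ E
    · exact hDE j hj
    · exact (hD j hj hI D (z · j)).imp fun _ => dConv_iff_tendsto.1
  choose q hq using hlim
  obtain ⟨U, hU, hqU⟩ : q ∈ ⋃₀ 𝒰 := hcover ▸ mem_univ q
  have hzU : ∀ᶠ t in (D : Filter (Finset 𝒰)), z t ∈ U :=
    tendsto_pi_nhds.2 hq ((hopen U hU).mem_nhds hqU)
  have hUt : ∀ᶠ t in (D : Filter (Finset 𝒰)), ⟨U, hU⟩ ∈ t :=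
    Eventually.mono (hDle (eventually_ge_atTop {⟨U, hU⟩})) fun _ => Finset.singleton_subset_iff.1
  obtain ⟨t, hzt, hUt⟩ := (hzU.and hUt).exists
  exact hz t _ hUt hzt

/-- If all factors with at most one exception are GO spaces, the product is initially
`lam`-compact iff every factor is. -/
theorem stmt17 (lam : Cardinal.{u}) (hlam : ℵ₀ ≤ lam)
    (J : Type u) (X : J → Type u) [∀ j, TopologicalSpace (X j)]
    (hne : ∀ j, Nonempty (X j))
    (hGO : ∃ E : Set J, E.Subsingleton ∧ ∀ j ∉ E, IsGOSpace (X j)) :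
    InitiallyCompact (∀ j, X j) lam ↔ ∀ j, InitiallyCompact (X j) lam := by
  obtain ⟨E, hE, hGO⟩ := hGO
  refine ⟨fun h j => h.of_continuous_surjective (continuous_apply j) (Function.surjective_eval j),
    fun h => initiallyCompact_pi hlam hE (fun j _ => h j) fun j hj _ hI D => ?_⟩
  exact (hGO j hj).dCompact (h j) hI D
end
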